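/- In the ring of formal power series in q over ℚ[x,y,t], let G = Σ_{n≥0} O_n(x,y,t) · q^n / n! (with O_0(x,y,t) = 1), where O_n(x,y,t) = Σ_{T ∈ 𝒪_n} x^{impr(T)} y^{prop(T) - deg_T(1)} t^{deg_T(1)}, and let R be the unique power series with constant term 1 satisfying R^2 = 1 - 2(x+y)q. Then G · (x + y - t + t·R) = x + y; equivalently, Σ_{n≥0} O_n(x,y,t) q^n/n! = (x+y)/(x + y - t + t√(1 - 2(x+y)q)). -/

import Mathlib

/-!
Write `F(L)` for the sum of `x ^ impr T * y ^ prop T` over the plane trees `T` labelled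
bijectively by a finite set `L`. Cutting off the leftmost subtree of the root splits such a tree
into trees on `M` and on `L \ M`, and the edge cut is improper exactly when `min L ∈ M`.
Exchanging `M` with `L \ M` gives `2 F(L) = (x + y) ∑_{M ⊆ L} F(M) F(L \ M)`, so `F(L)` depends
only on `|L|` and its exponential generating function `A` satisfies `(x + y) A² = 2 (A - q)`,
i.e. `(1 - (x + y) A)² = 1 - 2 (x + y) q`; hence `R = 1 - (x + y) A`. When the root carries the
least label every root edge is proper, and the same splitting gives `G = 1 + t A G`. Therefore
`G (x + y - t + t R) = (x + y) G (1 - t A) = x + y`.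
-/


/-- A plane tree with labeled vertices: a root label together with an ordered
list of child subtrees.  (A plane tree is a rooted tree in which the children
of each node are linearly ordered.) -/
inductive LTree : Type where
  | node : ℕ → List LTree → LTree

namespace LTree

/-- The label of the root. -/
def rootLabel : LTree → ℕ
  | node a _ => a

/-- The list of child subtrees of the root. -/
def children : LTree → List LTree
  | node _ cs => cs

/-- `deg_T(root)`: the number of children of the root. -/
def rootDeg (t : LTree) : ℕ := (children t).length

mutual
  /-- The list of all vertex labels of a tree. -/
  def labels : LTree → List ℕ
    | node a cs => a :: labelsList cs
  /-- The list of all vertex labels of a forest. -/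
  def labelsList : List LTree → List ℕ
    | [] => []
    | c :: rest => labels c ++ labelsList rest
end

/-- `β(v)`: the smallest label occurring in the subtree `t` rooted at `v`. -/
def minLabel (t : LTree) : ℕ := (labels t).foldr min (rootLabel t)

/-- `min { j, β(c₁), …, β(cₖ) }` for a vertex `j` and a list of subtrees `c₁, …, cₖ`. -/
def minOver (j : ℕ) (rest : List LTree) : ℕ := (rest.map minLabel).foldr min j

mutual
  /-- The list of edges of a tree, each recorded as a (parent label, child label)
  pair, in depth-first order. -/
  def edgeList : LTree → List (ℕ × ℕ)
    | node a cs => edgeListAux a cs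
  def edgeListAux : ℕ → List LTree → List (ℕ × ℕ)
    | _, [] => []
    | a, c :: rest => (a, rootLabel c) :: (edgeList c ++ edgeListAux a rest)
end

mutual
  /-- The list of improper edges of a tree: if a vertex `j` has children
  `j₁, …, jₖ` (ordered left to right), the edge `(j, jᵢ)` is improper when
  `β(jᵢ) < min { j, β(j_{i+1}), …, β(jₖ) }`. -/
  def improperEdges : LTree → List (ℕ × ℕ)
    | node a cs => improperEdgesAux a cs
  def improperEdgesAux : ℕ → List LTree → List (ℕ × ℕ)
    | _, [] => []
    | j, c :: rest =>
        (if minLabel c < minOver j rest then [(j, rootLabel c)] else [])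
          ++ improperEdges c ++ improperEdgesAux j rest
end

mutual
  /-- The list of proper (i.e. non-improper) edges of a tree. -/
  def properEdges : LTree → List (ℕ × ℕ)
    | node a cs => properEdgesAux a cs
  def properEdgesAux : ℕ → List LTree → List (ℕ × ℕ)
    | _, [] => []
    | j, c :: rest =>
        (if minLabel c < minOver j rest then [] else [(j, rootLabel c)])
          ++ properEdges c ++ properEdgesAux j rest
end

/-- `impr T`: the number of improper edges of `T`. -/
def impr (t : LTree) : ℕ := (improperEdges t).length

/-- `prop T`: the number of proper edges of `T`. -/
def propCount (t : LTree) : ℕ := (properEdges t).length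

/-- The number of edges of `T`. -/
def edgeCount (t : LTree) : ℕ := (edgeList t).length

/-- `T` is a labeled plane tree with `n` edges: its `n + 1` vertices are labeled
bijectively with `{1, 2, …, n + 1}`. -/
def IsLPT (n : ℕ) (t : LTree) : Prop := (labels t).Perm (List.range' 1 (n + 1))

/-- `T` is increasing: vertex labels increase along every path from the root. -/
inductive Increasing : LTree → Prop where
  | node (a : ℕ) (cs : List LTree) :
      (∀ c ∈ cs, a < rootLabel c) → (∀ c ∈ cs, Increasing c) → Increasing (node a cs)

end LTree

open MvPolynomial

/-- `Oₙ(x,y,t) = Σ_{T ∈ 𝒪ₙ} x^{impr T} y^{prop T - deg_T(1)} t^{deg_T(1)}`, the sum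
over all labeled plane trees with `n` edges whose root is labeled `1`, as a
polynomial in `ℚ[x,y,t]` (with `x = X 0`, `y = X 1`, `t = X 2`).  For `n = 0` the
unique such tree is a single vertex, so `O₀(x,y,t) = 1`. -/
noncomputable def Opoly (n : ℕ) : MvPolynomial (Fin 3) ℚ :=
  ∑ᶠ T ∈ {T : LTree | LTree.IsLPT n T ∧ LTree.rootLabel T = 1},
    (X 0 : MvPolynomial (Fin 3) ℚ) ^ LTree.impr T
      * (X 1) ^ (LTree.propCount T - LTree.rootDeg T) * (X 2) ^ LTree.rootDeg T

theorem List.isLeast_foldr_min {α : Type*} [LinearOrder α] (a : α) (l : List α) :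
    IsLeast {b | b ∈ a :: l} (l.foldr min a) := by
  induction l with
  | nil => simp
  | cons c l ih =>
    have hs : {b | b ∈ a :: c :: l} = insert c {b | b ∈ a :: l} := by
      ext; simp [or_left_comm]
    exact hs ▸ ih.insert c

theorem IsLeast.lt_iff_mem_left {α : Type*} [LinearOrder α] {s t : Set α} {a b m : α}
    (ha : IsLeast s a) (hb : IsLeast t b) (hst : Disjoint s t) (hm : IsLeast (s ∪ t) m) :
    a < b ↔ m ∈ s := by
  obtain rfl := hm.unique (ha.union hb)
  refine ⟨fun h => (min_eq_left h.le).symm ▸ ha.1, fun h => lt_of_not_ge fun hba => ?_⟩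
  rw [min_eq_right hba] at h
  exact Set.disjoint_left.1 hst h hb.1

namespace Finset

theorem sum_powerset_sdiff {α β : Type*} [DecidableEq α] [AddCommMonoid β]
    (s : Finset α) (f : Finset α → β) :
    ∑ t ∈ s.powerset, f (s \ t) = ∑ t ∈ s.powerset, f t :=
  sum_nbij' (s \ ·) (s \ ·) (by simp) (by simp)
    (fun _ ht => sdiff_sdiff_eq_self (mem_powerset.1 ht))
    (fun _ ht => sdiff_sdiff_eq_self (mem_powerset.1 ht)) fun _ _ => rfl

theorem sum_powerset_eq_sum_antidiagonal {α β : Type*} [DecidableEq α] [AddCommMonoid β]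
    (s : Finset α) (f : ℕ → ℕ → β) :
    ∑ t ∈ s.powerset, f t.card (s \ t).card =
      ∑ p ∈ antidiagonal s.card, s.card.choose p.1 • f p.1 p.2 := by
  rw [Nat.sum_antidiagonal_eq_sum_range_succ (fun i j => s.card.choose i • f i j),
    ← sum_powerset_apply_card]
  exact sum_congr rfl fun t ht => by rw [card_sdiff_of_subset (mem_powerset.1 ht)]

end Finset

section ExponentialGeneratingFunction

open Finset

variable {A : Type*} [CommRing A] [Algebra ℚ A]

noncomputable def egf (a : ℕ → A) : PowerSeries A :=
  PowerSeries.mk fun n => algebraMap ℚ A (n.factorial : ℚ)⁻¹ * a n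

lemma coeff_egf (a : ℕ → A) (n : ℕ) :
    PowerSeries.coeff n (egf a) = algebraMap ℚ A (n.factorial : ℚ)⁻¹ * a n :=
  PowerSeries.coeff_mk _ _

lemma egf_mul_egf (a b : ℕ → A) :
    egf a * egf b = egf fun n => ∑ p ∈ antidiagonal n, n.choose p.1 • (a p.1 * b p.2) := by
  refine PowerSeries.ext fun n => ?_
  rw [PowerSeries.coeff_mul, coeff_egf, mul_sum]
  refine sum_congr rfl fun p hp => ?_
  obtain rfl := mem_antidiagonal.1 hp
  have hchoose : ((p.1 + p.2).factorial : ℚ)⁻¹ * ((p.1 + p.2).choose p.1 : ℕ) =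
      (p.1.factorial : ℚ)⁻¹ * (p.2.factorial : ℚ)⁻¹ := by
    rw [Nat.cast_add_choose]
    field_simp
  have h := congrArg (algebraMap ℚ A) hchoose
  rw [map_mul, map_mul, map_natCast] at h
  rw [coeff_egf, coeff_egf, nsmul_eq_mul]
  linear_combination (-(a p.1 * b p.2)) * h

theorem PowerSeries.eq_of_sq_eq_sq {R : Type*} [CommRing R] [IsDomain R] [CharZero R]
    {f g : PowerSeries R} (h : f ^ 2 = g ^ 2) (hf : constantCoeff f = 1)
    (hg : constantCoeff g = 1) : f = g := by
  refine (sq_eq_sq_iff_eq_or_eq_neg.1 h).resolve_right fun hfg => ?_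
  have h1 := congrArg constantCoeff hfg
  rw [map_neg, hf, hg] at h1
  exact two_ne_zero (by linear_combination h1 : (2 : R) = 0)

end ExponentialGeneratingFunction

namespace LTree

open Finset

lemma rootLabel_mem_labels (T : LTree) : rootLabel T ∈ labels T := by
  cases T; simp [labels, rootLabel]

def consChild (c T : LTree) : LTree := node (rootLabel T) (c :: children T)

lemma rootLabel_consChild (c T : LTree) : rootLabel (consChild c T) = rootLabel T := rfl

lemma rootDeg_consChild (c T : LTree) : rootDeg (consChild c T) = rootDeg T + 1 := rfl

lemma consChild_node (c : LTree) (a : ℕ) (cs : List LTree) :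
    consChild c (node a cs) = node a (c :: cs) := rfl

lemma consChild_injective {c c' T T' : LTree} (h : consChild c T = consChild c' T') :
    c = c' ∧ T = T' := by
  cases T; cases T'
  simp only [consChild, rootLabel, children, node.injEq, List.cons.injEq] at h
  obtain ⟨rfl, rfl, rfl⟩ := h
  exact ⟨rfl, rfl⟩

lemma mem_labels_consChild {b : ℕ} {c T : LTree} :
    b ∈ labels (consChild c T) ↔ b ∈ labels c ∨ b ∈ labels T := by
  cases T
  simp only [consChild, rootLabel, children, labels, labelsList, List.mem_cons, List.mem_append]
  tauto

lemma coe_labels_consChild (c T : LTree) :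
    (labels (consChild c T) : Multiset ℕ) = labels c + labels T := by
  cases T
  simp only [consChild, rootLabel, children, labels, labelsList, Multiset.coe_add,
    Multiset.coe_eq_coe]
  exact List.perm_middle.symm

lemma isLeast_minLabel (T : LTree) : IsLeast {b | b ∈ labels T} (minLabel T) := by
  have hs : {b | b ∈ labels T} = {b | b ∈ rootLabel T :: labels T} := by
    ext; simpa using fun h => h ▸ rootLabel_mem_labels T
  exact hs ▸ List.isLeast_foldr_min (rootLabel T) (labels T)

lemma isLeast_minOver (a : ℕ) (cs : List LTree) :
    IsLeast {b | b ∈ labels (node a cs)} (minOver a cs) := by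
  induction cs with
  | nil => simp [labels, labelsList, minOver]
  | cons c cs ih =>
    have hs : {b | b ∈ labels (node a (c :: cs))} =
        {b | b ∈ labels c} ∪ {b | b ∈ labels (node a cs)} := by
      ext; exact mem_labels_consChild (T := node a cs)
    exact hs ▸ (isLeast_minLabel c).union ih

lemma minOver_eq_minLabel (a : ℕ) (cs : List LTree) : minOver a cs = minLabel (node a cs) :=
  (isLeast_minOver a cs).unique (isLeast_minLabel _)

lemma impr_consChild (c T : LTree) :
    impr (consChild c T) = (if minLabel c < minLabel T then 1 else 0) + impr c + impr T := by
  cases T with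
  | node a cs =>
    simp only [consChild, rootLabel, children, impr, improperEdges, improperEdgesAux,
      List.length_append, minOver_eq_minLabel]
    split_ifs <;> simp

lemma propCount_consChild (c T : LTree) :
    propCount (consChild c T) = (if minLabel c < minLabel T then 0 else 1) + propCount c
      + propCount T := by
  cases T with
  | node a cs =>
    simp only [consChild, rootLabel, children, propCount, properEdges, properEdgesAux,
      List.length_append, minOver_eq_minLabel]
    split_ifs <;> simp

noncomputable def treeWeight (T : LTree) : MvPolynomial (Fin 3) ℚ :=
  X 0 ^ impr T * X 1 ^ propCount T

noncomputable def rootWeight (T : LTree) : MvPolynomial (Fin 3) ℚ :=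
  X 0 ^ impr T * X 1 ^ (propCount T - rootDeg T) * X 2 ^ rootDeg T

lemma treeWeight_leaf (a : ℕ) : treeWeight (node a []) = 1 := by
  simp [treeWeight, impr, improperEdges, improperEdgesAux, propCount, properEdges, properEdgesAux]

lemma rootWeight_leaf (a : ℕ) : rootWeight (node a []) = 1 := by
  simp [rootWeight, impr, improperEdges, improperEdgesAux, propCount, properEdges, properEdgesAux,
    rootDeg, children]

lemma treeWeight_consChild (c T : LTree) :
    treeWeight (consChild c T) =
      (if minLabel c < minLabel T then X 0 else X 1) * treeWeight c * treeWeight T := by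
  rw [treeWeight, treeWeight, treeWeight, impr_consChild, propCount_consChild]
  split_ifs <;> ring

lemma not_minLabel_lt_of_rootLabel_le {c T : LTree}
    (h : ∀ b ∈ labels (consChild c T), rootLabel T ≤ b) : ¬ minLabel c < minLabel T := by
  have hT : minLabel T ≤ rootLabel T := (isLeast_minLabel T).2 (rootLabel_mem_labels T)
  have hc : rootLabel T ≤ minLabel c :=
    h _ (mem_labels_consChild.2 (Or.inl (isLeast_minLabel c).1))
  omega

lemma rootDeg_le_propCount {T : LTree} (h : ∀ b ∈ labels T, rootLabel T ≤ b) :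
    rootDeg T ≤ propCount T := by
  obtain ⟨a, cs⟩ := T
  induction cs with
  | nil => simp [rootDeg, children]
  | cons c cs ih =>
    rw [← consChild_node] at h ⊢
    have hcs := ih fun b hb => h b (mem_labels_consChild.2 (Or.inr hb))
    rw [rootDeg_consChild, propCount_consChild, if_neg (not_minLabel_lt_of_rootLabel_le h)]
    omega

lemma rootWeight_consChild {c T : LTree} (h : ∀ b ∈ labels (consChild c T), rootLabel T ≤ b) :
    rootWeight (consChild c T) = X 2 * treeWeight c * rootWeight T := by
  have hT := rootDeg_le_propCount fun b hb => h b (mem_labels_consChild.2 (Or.inr hb))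
  rw [rootWeight, rootWeight, treeWeight, impr_consChild, propCount_consChild,
    if_neg (not_minLabel_lt_of_rootLabel_le h), if_neg (not_minLabel_lt_of_rootLabel_le h),
    rootDeg_consChild,
    show 1 + propCount c + propCount T - (rootDeg T + 1) = propCount c + (propCount T - rootDeg T)
      by omega]
  ring

def IsTreeOn (L : Finset ℕ) (T : LTree) : Prop := (labels T : Multiset ℕ) = L.val

namespace IsTreeOn

variable {L M : Finset ℕ} {T c : LTree}

lemma mem_iff (h : IsTreeOn L T) {b : ℕ} : b ∈ labels T ↔ b ∈ L := by
  rw [← Multiset.mem_coe, h, Finset.mem_val]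

lemma nonempty (h : IsTreeOn L T) : L.Nonempty := ⟨_, h.mem_iff.1 (rootLabel_mem_labels T)⟩

lemma isLeast_minLabel (h : IsTreeOn L T) : IsLeast ↑L (minLabel T) := by
  have hs : {b | b ∈ labels T} = ↑L := Set.ext fun _ => h.mem_iff
  exact hs ▸ LTree.isLeast_minLabel T

lemma consChild (hM : M ⊆ L) (hc : IsTreeOn M c) (hT : IsTreeOn (L \ M) T) :
    IsTreeOn L (consChild c T) := by
  rw [IsTreeOn, coe_labels_consChild, hc, hT, Finset.sdiff_val,
    add_tsub_cancel_of_le (Finset.val_le_iff.2 hM)]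

lemma exists_consChild (h : IsTreeOn L T) (hT : children T ≠ []) :
    ∃ M ⊆ L, ∃ c T', IsTreeOn M c ∧ IsTreeOn (L \ M) T' ∧ T = LTree.consChild c T' := by
  obtain ⟨a, _ | ⟨c, cs⟩⟩ := T
  · exact absurd rfl hT
  rw [IsTreeOn, ← consChild_node, coe_labels_consChild] at h
  have hnd : (labels c : Multiset ℕ).Nodup :=
    Multiset.nodup_of_le (Multiset.le_add_right _ _) (h ▸ L.nodup)
  let M : Finset ℕ := ⟨labels c, hnd⟩
  have hML : M.val ≤ L.val := h ▸ Multiset.le_add_right _ _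
  refine ⟨M, Finset.val_le_iff.1 hML, c, node a cs, rfl, ?_, rfl⟩
  rw [IsTreeOn, Finset.sdiff_val, ← h]
  exact (add_tsub_cancel_left _ _).symm

lemma children_ne_nil (h : IsTreeOn L T) (hL : 2 ≤ L.card) : children T ≠ [] := by
  obtain ⟨a, cs⟩ := T
  rintro rfl
  have hcard := congrArg Multiset.card h
  simp [labels, labelsList] at hcard
  omega

end IsTreeOn

lemma isTreeOn_singleton_iff {a : ℕ} {T : LTree} : IsTreeOn {a} T ↔ T = node a [] := by
  refine ⟨fun h => ?_, fun h => h ▸ rfl⟩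
  obtain ⟨b, _ | ⟨c, cs⟩⟩ := T
  · simpa [IsTreeOn, labels, labelsList] using h
  · have hcard := congrArg Multiset.card h
    simp [labels, labelsList] at hcard
    exact absurd hcard.1 (List.ne_nil_of_mem (rootLabel_mem_labels c))

lemma finite_setOf_isTreeOn (L : Finset ℕ) : {T | IsTreeOn L T}.Finite := by
  induction L using Finset.strongInduction with
  | H L ih =>
  refine ((L.finite_toSet.image fun a => node a []).union
    ((L.ssubsets.filter Finset.Nonempty).finite_toSet.biUnion
      (t := fun M => Set.image2 consChild {c | IsTreeOn M c} {T | IsTreeOn (L \ M) T})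
      fun M hM => ?_)).subset ?_
  · obtain ⟨hML, hM⟩ := Finset.mem_filter.1 hM
    exact (ih M (Finset.mem_ssubsets.1 hML)).image2 _
      (ih _ (Finset.sdiff_ssubset (Finset.mem_ssubsets.1 hML).subset hM))
  · intro T (hT : IsTreeOn L T)
    by_cases hleaf : children T = []
    · obtain ⟨a, cs⟩ := T
      obtain rfl : cs = [] := hleaf
      exact Or.inl ⟨a, hT.mem_iff.1 (rootLabel_mem_labels _), rfl⟩
    · obtain ⟨M, hML, c, T', hc, hT', rfl⟩ := hT.exists_consChild hleaf
      have hssub : M ⊂ L := hML.ssubset_of_not_subset (Finset.sdiff_nonempty.1 hT'.nonempty)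
      refine Or.inr (Set.mem_biUnion (x := M) ?_ ⟨c, hc, T', hT', rfl⟩)
      simpa [hssub] using hc.nonempty

noncomputable def treesOn (L : Finset ℕ) : Finset LTree := (finite_setOf_isTreeOn L).toFinset

@[simp] lemma mem_treesOn {L : Finset ℕ} {T : LTree} : T ∈ treesOn L ↔ IsTreeOn L T :=
  Set.Finite.mem_toFinset _

lemma treesOn_empty : treesOn ∅ = ∅ :=
  Finset.eq_empty_of_forall_notMem fun _ hT => Finset.not_nonempty_empty (mem_treesOn.1 hT).nonempty

lemma treesOn_singleton (a : ℕ) : treesOn {a} = {node a []} := by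
  ext; simp [isTreeOn_singleton_iff]

/-- Splitting off the leftmost subtree of the root is a bijection from the trees on `L` onto the
pairs of trees on `M` and on `L \ M`, `M ⊆ L`. -/
lemma sum_treesOn_eq_sum_powerset {β : Type*} [AddCommMonoid β] {L : Finset ℕ}
    (hL : 2 ≤ L.card)
    (f : LTree → β) :
    ∑ T ∈ treesOn L, f T =
      ∑ M ∈ L.powerset, ∑ c ∈ treesOn M, ∑ T ∈ treesOn (L \ M), f (consChild c T) := by
  simp_rw [← Finset.sum_product']
  rw [Finset.sum_sigma']
  symm
  refine Finset.sum_bij (fun p _ => consChild p.2.1 p.2.2) ?_ ?_ ?_ fun _ _ => rfl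
  · rintro ⟨M, c, T⟩ hp
    simp only [Finset.mem_sigma, Finset.mem_powerset, Finset.mem_product, mem_treesOn] at hp
    exact mem_treesOn.2 (hp.2.1.consChild hp.1 hp.2.2)
  · rintro ⟨M, c, T⟩ hp ⟨M', c', T'⟩ hp' h
    simp only [Finset.mem_sigma, Finset.mem_product, mem_treesOn] at hp hp'
    obtain ⟨rfl, rfl⟩ := consChild_injective h
    obtain rfl : M = M' := Finset.val_injective (hp.2.1.symm.trans hp'.2.1)
    rfl
  · intro T hT
    have hT := mem_treesOn.1 hT
    obtain ⟨M, hM, c, T', hc, hT', rfl⟩ := hT.exists_consChild (hT.children_ne_nil hL)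
    exact ⟨⟨M, c, T'⟩, by simp [hM, hc, hT'], rfl⟩

noncomputable def treeSum (L : Finset ℕ) : MvPolynomial (Fin 3) ℚ :=
  ∑ T ∈ treesOn L, treeWeight T

lemma treeSum_empty : treeSum ∅ = 0 := by
  simp [treeSum, treesOn_empty]

lemma treeSum_singleton (a : ℕ) : treeSum {a} = 1 := by
  simp [treeSum, treesOn_singleton, treeWeight_leaf]

lemma minLabel_lt_minLabel_iff {L M : Finset ℕ} {c T : LTree} {m : ℕ} (hM : M ⊆ L)
    (hc : IsTreeOn M c) (hT : IsTreeOn (L \ M) T) (hm : IsLeast ↑L m) :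
    minLabel c < minLabel T ↔ m ∈ M :=
  hc.isLeast_minLabel.lt_iff_mem_left hT.isLeast_minLabel
    (disjoint_coe.2 disjoint_sdiff) (by rwa [← coe_union, union_sdiff_of_subset hM])

lemma treeSum_eq_sum_powerset {L : Finset ℕ} {m : ℕ} (hL : 2 ≤ L.card) (hm : IsLeast ↑L m) :
    treeSum L =
      ∑ M ∈ L.powerset, (if m ∈ M then X 0 else X 1) * treeSum M * treeSum (L \ M) := by
  rw [treeSum, sum_treesOn_eq_sum_powerset hL]
  refine sum_congr rfl fun M hM => ?_
  rw [treeSum, treeSum, mul_assoc, sum_mul_sum, mul_sum]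
  refine sum_congr rfl fun c hc => ?_
  rw [mul_sum]
  refine sum_congr rfl fun T hT => ?_
  simp only [treeWeight_consChild, minLabel_lt_minLabel_iff (mem_powerset.1 hM) (mem_treesOn.1 hc)
    (mem_treesOn.1 hT) hm]
  ring

/-- The weight of the edge to the leftmost subtree is `x` or `y` according as the least label
lies in that subtree or not; the complement `M ↦ L \ M` exchanges the two cases. -/
lemma two_mul_treeSum {L : Finset ℕ} (hL : 2 ≤ L.card) :
    2 * treeSum L = (X 0 + X 1) * ∑ M ∈ L.powerset, treeSum M * treeSum (L \ M) := by
  obtain ⟨m, hm⟩ : ∃ m, IsLeast (↑L : Set ℕ) m :=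
    ⟨_, L.isLeast_min' (card_pos.1 (by omega))⟩
  have hmL : m ∈ L := hm.1
  have hswap : ∑ M ∈ L.powerset, (if m ∈ M then treeSum M * treeSum (L \ M) else 0) =
      ∑ M ∈ L.powerset, (if m ∈ M then 0 else treeSum M * treeSum (L \ M)) := by
    rw [← sum_powerset_sdiff]
    refine sum_congr rfl fun M hM => ?_
    rw [Finset.sdiff_sdiff_eq_self (mem_powerset.1 hM), mul_comm]
    simp [hmL]
  have hsplit : ∀ u v : MvPolynomial (Fin 3) ℚ,
      ∑ M ∈ L.powerset, (if m ∈ M then u else v) * treeSum M * treeSum (L \ M) =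
        u * ∑ M ∈ L.powerset, (if m ∈ M then treeSum M * treeSum (L \ M) else 0) +
          v * ∑ M ∈ L.powerset, (if m ∈ M then 0 else treeSum M * treeSum (L \ M)) := by
    intro u v
    rw [mul_sum, mul_sum, ← sum_add_distrib]
    exact sum_congr rfl fun M _ => by split_ifs <;> ring
  have h1 := hsplit 1 1
  simp only [one_mul, ite_self] at h1
  rw [treeSum_eq_sum_powerset hL hm, hsplit, h1, hswap]
  ring

noncomputable def treeSeq (n : ℕ) : MvPolynomial (Fin 3) ℚ := treeSum (range n)

lemma treeSeq_zero : treeSeq 0 = 0 := treeSum_empty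

lemma treeSeq_one : treeSeq 1 = 1 := treeSum_singleton 0

lemma two_mul_treeSum_eq_sum_antidiagonal {L : Finset ℕ} (hL : 2 ≤ L.card)
    (ih : ∀ M : Finset ℕ, M.card < L.card → treeSum M = treeSeq M.card) :
    2 * treeSum L = (X 0 + X 1) *
      ∑ p ∈ antidiagonal L.card, L.card.choose p.1 • (treeSeq p.1 * treeSeq p.2) := by
  rw [two_mul_treeSum hL, ← sum_powerset_eq_sum_antidiagonal L fun i j => treeSeq i * treeSeq j]
  refine congrArg _ (sum_congr rfl fun M hM => ?_)
  have hcard := card_sdiff_add_card_eq_card (mem_powerset.1 hM)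
  rcases M.eq_empty_or_nonempty with rfl | hM0
  · simp [treeSum_empty, treeSeq_zero]
  rcases (L \ M).eq_empty_or_nonempty with hLM | hLM
  · simp [hLM, treeSum_empty, treeSeq_zero]
  · rw [ih M (by have := hLM.card_pos; omega), ih (L \ M) (by have := hM0.card_pos; omega)]

lemma treeSum_eq_treeSeq (L : Finset ℕ) : treeSum L = treeSeq L.card := by
  induction hn : L.card using Nat.strong_induction_on generalizing L with
  | _ n ih =>
  have ih' : ∀ M : Finset ℕ, M.card < n → treeSum M = treeSeq M.card :=
    fun M hM => ih _ hM M rfl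
  obtain hn0 | hn1 | hn2 : n = 0 ∨ n = 1 ∨ 2 ≤ n := by omega
  · rw [card_eq_zero.1 (hn.trans hn0), hn0, treeSeq_zero, treeSum_empty]
  · obtain ⟨a, rfl⟩ := card_eq_one.1 (hn.trans hn1)
    rw [hn1, treeSeq_one, treeSum_singleton]
  · have hL := two_mul_treeSum_eq_sum_antidiagonal (L := L) (by omega) (hn ▸ ih')
    have hrange := two_mul_treeSum_eq_sum_antidiagonal (L := range n) (by simpa)
      (by simpa using ih')
    rw [hn] at hL
    rw [card_range] at hrange
    exact mul_left_cancel₀ two_ne_zero (hL.trans hrange.symm)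

lemma two_mul_treeSeq {n : ℕ} (hn : 2 ≤ n) :
    2 * treeSeq n = (X 0 + X 1) *
      ∑ p ∈ antidiagonal n, n.choose p.1 • (treeSeq p.1 * treeSeq p.2) := by
  have h := two_mul_treeSum_eq_sum_antidiagonal (L := range n) (by rwa [card_range])
    fun M _ => treeSum_eq_treeSeq M
  rwa [card_range] at h

noncomputable def minRootSum (m : ℕ) (L : Finset ℕ) : MvPolynomial (Fin 3) ℚ :=
  ∑ T ∈ (treesOn L).filter (rootLabel · = m), rootWeight T

lemma minRootSum_singleton (a : ℕ) : minRootSum a {a} = 1 := by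
  rw [minRootSum, treesOn_singleton, filter_singleton]
  simp [rootLabel, rootWeight_leaf]

lemma minRootSum_of_notMem {m : ℕ} {L : Finset ℕ} (hm : m ∉ L) : minRootSum m L = 0 :=
  sum_eq_zero fun T hT => by
    obtain ⟨hLT, rfl⟩ := mem_filter.1 hT
    exact absurd ((mem_treesOn.1 hLT).mem_iff.1 (rootLabel_mem_labels T)) hm

lemma minRootSum_eq_sum_powerset {L : Finset ℕ} {m : ℕ} (hL : 2 ≤ L.card)
    (hm : IsLeast ↑L m) :
    minRootSum m L = X 2 * ∑ M ∈ L.powerset, treeSum M * minRootSum m (L \ M) := by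
  rw [minRootSum, sum_filter, sum_treesOn_eq_sum_powerset hL, mul_sum]
  refine sum_congr rfl fun M hM => ?_
  rw [treeSum, minRootSum, sum_filter, sum_mul_sum, mul_sum]
  refine sum_congr rfl fun c hc => ?_
  rw [mul_sum]
  refine sum_congr rfl fun T hT => ?_
  rw [rootLabel_consChild]
  split_ifs with hroot
  · have hcT := (mem_treesOn.1 hc).consChild (mem_powerset.1 hM) (mem_treesOn.1 hT)
    rw [rootWeight_consChild fun b hb => hroot ▸ hm.2 (hcT.mem_iff.1 hb)]
    ring
  · rw [mul_zero, mul_zero]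

lemma minRootSum_eq_sum_antidiagonal {L : Finset ℕ} {m n : ℕ} (hn : 1 ≤ n)
    (hL : L.card = n + 1) (hm : IsLeast ↑L m)
    (ih : ∀ k < n, ∀ {K : Finset ℕ} {m' : ℕ}, IsLeast ↑K m' → K.card = k + 1 →
      minRootSum m' K = Opoly k) :
    minRootSum m L =
      X 2 * ∑ p ∈ antidiagonal n, n.choose p.1 • (treeSeq p.1 * Opoly p.2) := by
  have hmL : m ∈ L := hm.1
  set L₀ := L.erase m
  have hL₀ : L₀.card = n := by rw [card_erase_of_mem hmL, hL]; rfl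
  rw [minRootSum_eq_sum_powerset (by omega) hm, ← insert_erase hmL,
    sum_powerset_insert (notMem_erase m L)]
  have hwithout : ∀ M ∈ L₀.powerset,
      treeSum M * minRootSum m (insert m L₀ \ M) = treeSeq M.card * Opoly (L₀ \ M).card := by
    intro M hM
    rcases M.eq_empty_or_nonempty with rfl | hM0
    · rw [treeSum_empty, card_empty, treeSeq_zero, zero_mul, zero_mul]
    have hmM : m ∉ M := fun h => notMem_erase m L (mem_powerset.1 hM h)
    have hsub : insert m (L₀ \ M) ⊆ L :=
      insert_subset hmL (sdiff_subset.trans (erase_subset m L))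
    rw [treeSum_eq_treeSeq, insert_sdiff_of_notMem _ hmM,
      ih _ (by rw [card_sdiff_of_subset (mem_powerset.1 hM)]; have := hM0.card_pos; omega)
        ⟨mem_insert_self m _, fun b hb => hm.2 (hsub hb)⟩
        (card_insert_of_notMem fun h => notMem_erase m L (sdiff_subset h))]
  have hwith : ∀ M ∈ L₀.powerset,
      treeSum (insert m M) * minRootSum m (insert m L₀ \ insert m M) = 0 :=
    fun M _ => by rw [minRootSum_of_notMem (by simp), mul_zero]
  rw [sum_congr rfl hwithout, sum_eq_zero hwith, add_zero,
    sum_powerset_eq_sum_antidiagonal L₀ fun i j => treeSeq i * Opoly j, hL₀]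

lemma isLeast_Icc_one (n : ℕ) : IsLeast (↑(Icc 1 (n + 1)) : Set ℕ) 1 := by
  rw [coe_Icc]; exact isLeast_Icc (by omega)

lemma Opoly_eq_minRootSum (n : ℕ) : Opoly n = minRootSum 1 (Icc 1 (n + 1)) := by
  have hs : {T | IsLPT n T ∧ rootLabel T = 1} =
      ↑((treesOn (Icc 1 (n + 1))).filter (rootLabel · = 1)) := by
    ext T
    simp only [coe_filter, mem_treesOn, IsTreeOn, IsLPT, Set.mem_ofPred_eq, ← Multiset.coe_eq_coe]
    rfl
  rw [Opoly, hs, finsum_mem_coe_finset]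
  rfl

lemma minRootSum_eq_Opoly {L : Finset ℕ} {m n : ℕ} (hm : IsLeast ↑L m) (hL : L.card = n + 1) :
    minRootSum m L = Opoly n := by
  induction n using Nat.strong_induction_on generalizing L m with
  | _ n ih =>
  rcases Nat.eq_zero_or_pos n with rfl | hn
  · obtain ⟨a, rfl⟩ := card_eq_one.1 hL
    obtain rfl : m = a := by simpa using hm.1
    rw [Opoly_eq_minRootSum, Icc_self, minRootSum_singleton, minRootSum_singleton]
  · rw [minRootSum_eq_sum_antidiagonal hn hL hm ih, Opoly_eq_minRootSum,
      minRootSum_eq_sum_antidiagonal hn (by simp) (isLeast_Icc_one n) ih]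

lemma Opoly_zero : Opoly 0 = 1 := by
  rw [Opoly_eq_minRootSum, Icc_self, minRootSum_singleton]

lemma Opoly_eq_sum_antidiagonal {n : ℕ} (hn : 1 ≤ n) :
    Opoly n = X 2 * ∑ p ∈ antidiagonal n, n.choose p.1 • (treeSeq p.1 * Opoly p.2) := by
  rw [Opoly_eq_minRootSum]
  exact minRootSum_eq_sum_antidiagonal hn (by simp) (isLeast_Icc_one n)
    fun _ _ _ _ => minRootSum_eq_Opoly

lemma C_mul_egf_treeSeq_sq :
    PowerSeries.C (X 0 + X 1) * egf treeSeq ^ 2 = 2 * (egf treeSeq - PowerSeries.X) := by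
  rw [sq, egf_mul_egf, ← map_ofNat PowerSeries.C 2]
  refine PowerSeries.ext fun n => ?_
  rw [PowerSeries.coeff_C_mul, PowerSeries.coeff_C_mul, map_sub, coeff_egf, coeff_egf,
    PowerSeries.coeff_X]
  obtain rfl | rfl | hn : n = 0 ∨ n = 1 ∨ 2 ≤ n := by omega
  · simp [treeSeq_zero]
  · simp [Nat.antidiagonal_succ, treeSeq_zero, treeSeq_one]
  · rw [if_neg (by omega)]
    linear_combination (-algebraMap ℚ (MvPolynomial (Fin 3) ℚ) (n.factorial : ℚ)⁻¹) *
      two_mul_treeSeq hn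

lemma egf_Opoly_mul : egf Opoly * (1 - PowerSeries.C (X 2) * egf treeSeq) = 1 := by
  suffices h : egf Opoly = 1 + PowerSeries.C (X 2) * (egf treeSeq * egf Opoly) by
    linear_combination h
  rw [egf_mul_egf]
  refine PowerSeries.ext fun n => ?_
  rw [map_add, PowerSeries.coeff_one, PowerSeries.coeff_C_mul, coeff_egf, coeff_egf]
  rcases Nat.eq_zero_or_pos n with rfl | hn
  · simp [Opoly_zero, treeSeq_zero]
  · rw [Opoly_eq_sum_antidiagonal hn, if_neg hn.ne']
    ring

end LTree

/-- In `ℚ[x,y,t][[q]]`, the generating function `G = Σ_{n≥0} Oₙ(x,y,t) qⁿ/n!`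
satisfies `G · (x + y - t + t·R) = x + y`, where `R` is the unique power series
with constant term `1` such that `R² = 1 - 2(x+y)q`; that is,
`Σ_{n≥0} Oₙ(x,y,t) qⁿ/n! = (x+y)/(x + y - t + t√(1 - 2(x+y)q))`. -/
theorem egf_Opoly (R : PowerSeries (MvPolynomial (Fin 3) ℚ))
    (hR0 : PowerSeries.constantCoeff (R := MvPolynomial (Fin 3) ℚ) R = 1)
    (hR2 : R ^ 2 = 1 - 2 * PowerSeries.C (R := MvPolynomial (Fin 3) ℚ) (X 0 + X 1) * PowerSeries.X) :
    (PowerSeries.mk fun n => MvPolynomial.C ((n.factorial : ℚ)⁻¹) * Opoly n)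
      * (PowerSeries.C (R := MvPolynomial (Fin 3) ℚ) (X 0 + X 1)
          - PowerSeries.C (R := MvPolynomial (Fin 3) ℚ) (X 2)
          + PowerSeries.C (R := MvPolynomial (Fin 3) ℚ) (X 2) * R)
      = PowerSeries.C (R := MvPolynomial (Fin 3) ℚ) (X 0 + X 1) := by
  have hR : R = 1 - PowerSeries.C (X 0 + X 1) * egf LTree.treeSeq := by
    refine PowerSeries.eq_of_sq_eq_sq ?_ hR0 ?_
    · rw [hR2]
      linear_combination (-PowerSeries.C (X 0 + X 1)) * LTree.C_mul_egf_treeSeq_sq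
    · rw [map_sub, map_one, map_mul, PowerSeries.constantCoeff_C,
        ← PowerSeries.coeff_zero_eq_constantCoeff_apply, coeff_egf, LTree.treeSeq_zero, mul_zero,
        mul_zero, sub_zero]
  subst hR
  change egf Opoly * _ = _
  linear_combination PowerSeries.C (X 0 + X 1) * LTree.egf_Opoly_mul
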